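/- There exist constants C₁ > 0 and C₂ > 0 such that for every bilinear function p(x,y) = α + βx + γy + δxy on [0,1]², C₁ · ∫_{[0,1]²} ( p_x(x,y)² + p_y(x,y)² ) dx dy ≤ T(p_x²) + T(p_y²) ≤ C₂ · ∫_{[0,1]²} ( p_x(x,y)² + p_y(x,y)² ) dx dy, where T(g) = (1/4)( g(0,0) + g(1,0) + g(0,1) + g(1,1) ) is the 2D tensor-product trapezoid rule on [0,1]². -/

import Mathlib

/-!
Both sides are quadratic forms in the coefficients of `p = α + β x + γ y + δ x y`, whose gradient
`(β + δ y, γ + δ x)` does not involve `α`. Completing the square, the exact integral equals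
`(β + δ/2)² + (γ + δ/2)² + δ²/6`, while the trapezoid rule gives the same expression with `δ²/2`
in place of `δ²/6`; hence `C₁ = 1` and `C₂ = 3` work.
-/

noncomputable section

/-- The 2D tensor-product trapezoid rule on `[0,1]²`. -/
def trapQ (g : ℝ → ℝ → ℝ) : ℝ := (1/4) * (g 0 0 + g 1 0 + g 0 1 + g 1 1)

/-- Partial derivative in the first variable. -/
def gradX (f : ℝ → ℝ → ℝ) (x y : ℝ) : ℝ := deriv (fun s => f s y) x

/-- Partial derivative in the second variable. -/
def gradY (f : ℝ → ℝ → ℝ) (x y : ℝ) : ℝ := deriv (fun t => f x t) y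

lemma integral_quadratic_zero_one (a b c : ℝ) :
    ∫ t in (0:ℝ)..1, (a + b * t + c * t ^ 2) = a + b / 2 + c / 3 := by
  rw [intervalIntegral.integral_add, intervalIntegral.integral_add,
    intervalIntegral.integral_const_mul, intervalIntegral.integral_const_mul, integral_id,
    integral_pow]
  · norm_num
    ring
  all_goals exact Continuous.intervalIntegrable (by fun_prop) _ _

section Bilinear

variable (α β γ δ : ℝ)

lemma gradX_bilinear (x y : ℝ) :
    gradX (fun x y => α + β * x + γ * y + δ * x * y) x y = β + δ * y := by
  have h : (fun s => α + β * s + γ * y + δ * s * y) = fun s => (α + γ * y) + (β + δ * y) * s := by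
    funext s
    ring
  rw [gradX, h]
  simp

lemma gradY_bilinear (x y : ℝ) :
    gradY (fun x y => α + β * x + γ * y + δ * x * y) x y = γ + δ * x := by
  have h : (fun t => α + β * x + γ * t + δ * x * t) = fun t => (α + β * x) + (γ + δ * x) * t := by
    funext t
    ring
  rw [gradY, h]
  simp

lemma integral_gradSq_bilinear :
    let p : ℝ → ℝ → ℝ := fun x y => α + β * x + γ * y + δ * x * y
    ∫ x in (0:ℝ)..1, ∫ y in (0:ℝ)..1, (gradX p x y ^ 2 + gradY p x y ^ 2)
      = (β + δ / 2) ^ 2 + (γ + δ / 2) ^ 2 + δ ^ 2 / 6 := by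
  intro p
  have inner (x : ℝ) : ∫ y in (0:ℝ)..1, (gradX p x y ^ 2 + gradY p x y ^ 2)
      = (β ^ 2 + β * δ + δ ^ 2 / 3 + γ ^ 2) + 2 * γ * δ * x + δ ^ 2 * x ^ 2 := by
    have h : (fun y => gradX p x y ^ 2 + gradY p x y ^ 2)
        = fun y => (β ^ 2 + (γ + δ * x) ^ 2) + 2 * β * δ * y + δ ^ 2 * y ^ 2 := by
      funext y
      rw [gradX_bilinear, gradY_bilinear]
      ring
    rw [h, integral_quadratic_zero_one]
    ring
  simp only [inner, integral_quadratic_zero_one]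
  ring

lemma trapQ_gradSq_bilinear :
    let p : ℝ → ℝ → ℝ := fun x y => α + β * x + γ * y + δ * x * y
    trapQ (fun x y => gradX p x y ^ 2) + trapQ (fun x y => gradY p x y ^ 2)
      = (β + δ / 2) ^ 2 + (γ + δ / 2) ^ 2 + δ ^ 2 / 2 := by
  simp only [trapQ, gradX_bilinear, gradY_bilinear]
  ring

end Bilinear

theorem stmt_14 :
    ∃ C1 C2 : ℝ, 0 < C1 ∧ 0 < C2 ∧
      ∀ α β γ δ : ℝ,
        (fun p : ℝ → ℝ → ℝ =>
          C1 * (∫ x in (0:ℝ)..1, ∫ y in (0:ℝ)..1, (gradX p x y ^ 2 + gradY p x y ^ 2))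
              ≤ trapQ (fun x y => gradX p x y ^ 2) + trapQ (fun x y => gradY p x y ^ 2)
          ∧ trapQ (fun x y => gradX p x y ^ 2) + trapQ (fun x y => gradY p x y ^ 2)
              ≤ C2 * (∫ x in (0:ℝ)..1, ∫ y in (0:ℝ)..1,
                  (gradX p x y ^ 2 + gradY p x y ^ 2)))
          (fun x y => α + β * x + γ * y + δ * x * y) := by
  refine ⟨1, 3, one_pos, three_pos, fun α β γ δ => ?_⟩
  dsimp only
  rw [integral_gradSq_bilinear, trapQ_gradSq_bilinear]
  constructor <;> linarith [sq_nonneg δ, sq_nonneg (β + δ / 2), sq_nonneg (γ + δ / 2)]
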